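/- arXiv:2412.13499 — 2 statements merged into one kernel-verified Lean document; each statement's English description precedes it below -/
import Mathlib

section
/- Let X ⊆ ℕ be an infinite set with uniqueness of sums, and let u be an X-adequate ultrafilter on ℕ. Then u generates a free subsemigroup: for all n, m ≥ 1, u^n = u^m implies n = m. -/
/-!
Call a finite `F ⊆ X` split into `n` blocks if it is the union of `n` consecutive nonempty pieces,
each with sum in the adequate set `A`. Such a splitting is unique: listing `F` increasingly gives
the start of a subsequence of the enumeration of `X`, so adequacy makes the first block the only
initial segment of `F` with sum in `A`. Since `A ∈ u` and `FS Y ∈ u` for every cofinite `Y ⊆ X`,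
the sums of sets split into `n` blocks form a member of `u^n`. If `u^n = u^m`, some number is such
a sum for `n` and for `m`; by uniqueness of sums both come from one set `F`, which therefore splits
into `n` and into `m` blocks, whence `n = m`.
-/

open Filter

attribute [local instance] Ultrafilter.add Ultrafilter.addSemigroup

/-- `sumPow u n` is the `n`-fold sum `u + ⋯ + u` of the ultrafilter `u`, for `n ≥ 1`
(with junk value `u` at `n = 0`). -/
def sumPow (u : Ultrafilter ℕ) : ℕ → Ultrafilter ℕ
  | 0 => u
  | 1 => u
  | n + 2 => sumPow u (n + 1) + u

/-- `FS A` is the set of all sums of nonempty finite subsets of `A`. -/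
def FS (A : Set ℕ) : Set ℕ :=
  {s | ∃ F : Finset ℕ, F.Nonempty ∧ ↑F ⊆ A ∧ s = ∑ i ∈ F, i}

/-- `A` has uniqueness of sums: two nonempty finite subsets of `A` with the same sum are equal. -/
def UniquenessOfSums (A : Set ℕ) : Prop :=
  ∀ F G : Finset ℕ, ↑F ⊆ A → ↑G ⊆ A → F.Nonempty → G.Nonempty →
    (∑ i ∈ F, i) = ∑ i ∈ G, i → F = G

/-- `A` is `X`-adequate: `A ⊆ FS X` and for every subsequence of the increasing enumeration
of `X` there is a unique `m` such that the sum of the first `m + 1` terms lies in `A`. -/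
def IsAdequateSet (X A : Set ℕ) : Prop :=
  A ⊆ FS X ∧ ∀ g : ℕ → ℕ, StrictMono g →
    ∃! m : ℕ, (∑ k ∈ Finset.range (m + 1), Nat.nth (· ∈ X) (g k)) ∈ A

/-- An ultrafilter `u` is `X`-adequate: some `X`-adequate set belongs to `u`, and `FS Y ∈ u`
for every cofinite subset `Y` of `X`. -/
def IsAdequateUltrafilter (X : Set ℕ) (u : Ultrafilter ℕ) : Prop :=
  (∃ A ∈ u, IsAdequateSet X A) ∧
    ∀ Y : Set ℕ, Y ⊆ X → (X \ Y).Finite → FS Y ∈ u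

open Finset

section InitialSegment

variable {α : Type*} [LinearOrder α]

def IsInitialSegment (c F : Finset α) : Prop :=
  c ⊆ F ∧ ∀ x ∈ c, ∀ y ∈ F \ c, x < y

lemma IsInitialSegment.subset_of_card_le {c d F : Finset α}
    (hc : IsInitialSegment c F) (hd : IsInitialSegment d F) (hcard : #c ≤ #d) : c ⊆ d := by
  intro x hx
  by_contra hxd
  have : d ⊆ c.erase x := fun y hy ↦ by
    have hyx : y < x := hd.2 y hy x (mem_sdiff.2 ⟨hc.1 hx, hxd⟩)
    have hyc : y ∈ c := by
      by_contra hyc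
      exact (hc.2 x hx y (mem_sdiff.2 ⟨hd.1 hy, hyc⟩)).not_gt hyx
    exact mem_erase.2 ⟨hyx.ne, hyc⟩
  have hcard' := (card_le_card this).trans_eq (card_erase_of_mem hx)
  have := card_pos.2 ⟨x, hx⟩
  omega

lemma IsInitialSegment.of_subset {c d F : Finset α}
    (hc : IsInitialSegment c F) (hcd : c ⊆ d) (hdF : d ⊆ F) : IsInitialSegment c d :=
  ⟨hcd, fun x hx y hy ↦ hc.2 x hx y (sdiff_subset_sdiff hdF le_rfl hy)⟩

end InitialSegment

lemma exists_strictMono_sum_nth_eq_sum_take {X : Set ℕ} {l : List ℕ}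
    (hl : l.Pairwise (· < ·)) (hlX : ∀ x ∈ l, x ∈ X) :
    ∃ g : ℕ → ℕ, StrictMono g ∧
      ∀ j ≤ l.length, ∑ k ∈ range j, Nat.nth (· ∈ X) (g k) = (l.take j).sum := by
  classical
  -- past the end of `l` any strictly increasing continuation will do
  let g : ℕ → ℕ := fun k ↦ if h : k < l.length then Nat.count (· ∈ X) l[k] else l.sum + k
  refine ⟨g, fun a b hab ↦ ?_, fun j hj ↦ ?_⟩
  · by_cases hb : b < l.length
    · have ha : a < l.length := hab.trans hb
      simp only [g, dif_pos ha, dif_pos hb]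
      exact Nat.count_strict_mono (hlX _ (l.getElem_mem ha))
        (List.pairwise_iff_getElem.1 hl a b ha hb hab)
    · simp only [g, dif_neg hb]
      split_ifs with ha
      · calc Nat.count (· ∈ X) l[a] ≤ l[a] := Nat.count_le _
          _ ≤ l.sum := List.le_sum_of_mem (l.getElem_mem ha)
          _ < l.sum + b := by omega
      · omega
  · induction j with
    | zero => simp
    | succ j ih =>
      have hj' : j < l.length := hj
      rw [sum_range_succ, ih hj'.le, List.sum_take_succ _ _ hj']
      simp only [g, dif_pos hj', Nat.nth_count (hlX _ (l.getElem_mem hj'))]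

lemma sum_sort_eq_sum (s : Finset ℕ) : s.sort.sum = ∑ i ∈ s, i := by
  rw [← Multiset.sum_coe, sort_eq]
  simp

lemma IsAdequateSet.eq_of_isInitialSegment {X A : Set ℕ} (hA : IsAdequateSet X A)
    {c d : Finset ℕ} (hdX : ↑d ⊆ X) (hc : c.Nonempty) (hcd : IsInitialSegment c d)
    (hcA : ∑ i ∈ c, i ∈ A) (hdA : ∑ i ∈ d, i ∈ A) : c = d := by
  set l := c.sort ++ (d \ c).sort
  have hlen : l.length = #c + #(d \ c) := by simp [l]
  have hlX : ∀ x ∈ l, x ∈ X := fun x hx ↦ by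
    rcases List.mem_append.1 hx with hx | hx
    · exact hdX (hcd.1 ((mem_sort _).1 hx))
    · exact hdX (mem_sdiff.1 ((mem_sort _).1 hx)).1
  have hl_lt : l.Pairwise (· < ·) := List.pairwise_append.2
    ⟨(sortedLT_sort c).pairwise, (sortedLT_sort (d \ c)).pairwise,
      fun x hx y hy ↦ hcd.2 x ((mem_sort _).1 hx) y ((mem_sort _).1 hy)⟩
  obtain ⟨g, hg, hsum⟩ := exists_strictMono_sum_nth_eq_sum_take hl_lt hlX
  obtain ⟨m, -, hm⟩ := hA.2 g hg
  have hc_pos : 0 < #c := card_pos.2 hc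
  have hcm : #c - 1 = m := hm _ <| by
    beta_reduce
    rw [Nat.sub_add_cancel hc_pos, hsum _ (by omega),
      List.take_left' (length_sort _), sum_sort_eq_sum]
    exact hcA
  have hdm : l.length - 1 = m := hm _ <| by
    beta_reduce
    rw [Nat.sub_add_cancel (by omega), hsum _ le_rfl, List.take_length,
      List.sum_append, sum_sort_eq_sum, sum_sort_eq_sum, add_comm, sum_sdiff hcd.1]
    exact hdA
  have : d \ c = ∅ := card_eq_zero.1 (by omega)
  exact hcd.1.antisymm (sdiff_eq_empty_iff_subset.1 this)

lemma IsAdequateSet.eq_of_isInitialSegment_of_isInitialSegment {X A : Set ℕ}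
    (hA : IsAdequateSet X A) {c d F : Finset ℕ} (hFX : ↑F ⊆ X)
    (hc : IsInitialSegment c F) (hd : IsInitialSegment d F) (hc_ne : c.Nonempty)
    (hd_ne : d.Nonempty) (hcA : ∑ i ∈ c, i ∈ A) (hdA : ∑ i ∈ d, i ∈ A) : c = d := by
  wlog hcd : #c ≤ #d
  · exact (this hA hFX hd hc hd_ne hc_ne hdA hcA (by omega)).symm
  exact hA.eq_of_isInitialSegment (fun x hx ↦ hFX (hd.1 hx)) hc_ne
    (hc.of_subset (hc.subset_of_card_le hd hcd) hd.1) hcA hdA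

def SplitsIntoBlocks (X A : Set ℕ) : Finset ℕ → ℕ → Prop
  | F, 0 => F = ∅
  | F, n + 1 => ∃ c, IsInitialSegment c F ∧ c.Nonempty ∧ ↑c ⊆ X ∧ ∑ i ∈ c, i ∈ A ∧
      SplitsIntoBlocks X A (F \ c) n

namespace SplitsIntoBlocks

variable {X A : Set ℕ} {F G : Finset ℕ} {n m : ℕ}

lemma subset (h : SplitsIntoBlocks X A F n) : ↑F ⊆ X := by
  induction n generalizing F with
  | zero => simp [show F = ∅ from h]
  | succ n ih =>
    obtain ⟨c, -, -, hcX, -, hrest⟩ := h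
    intro x hx
    by_cases hxc : x ∈ c
    · exact hcX hxc
    · exact ih hrest (mem_sdiff.2 ⟨hx, hxc⟩)

lemma nonempty (h : SplitsIntoBlocks X A F n) (hn : n ≠ 0) : F.Nonempty := by
  obtain _ | n := n
  · exact absurd rfl hn
  · obtain ⟨c, hc, hc_ne, -⟩ := h
    exact hc_ne.mono hc.1

lemma eq_of_isAdequateSet (hA : IsAdequateSet X A) (hn : SplitsIntoBlocks X A F n)
    (hm : SplitsIntoBlocks X A F m) : n = m := by
  induction n generalizing F m with
  | zero =>
    obtain _ | m := m
    · rfl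
    · exact absurd hn (hm.nonempty m.succ_ne_zero).ne_empty
  | succ n ih =>
    obtain _ | m := m
    · exact absurd hm (hn.nonempty n.succ_ne_zero).ne_empty
    have hFX := hn.subset
    obtain ⟨c, hc, hc_ne, -, hcA, hn⟩ := hn
    obtain ⟨d, hd, hd_ne, -, hdA, hm⟩ := hm
    obtain rfl : c = d :=
      hA.eq_of_isInitialSegment_of_isInitialSegment hFX hc hd hc_ne hd_ne hcA hdA
    rw [ih hn hm]

lemma union (h : SplitsIntoBlocks X A F n) (hG_ne : G.Nonempty) (hGX : ↑G ⊆ X)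
    (hGA : ∑ i ∈ G, i ∈ A) (hFG : ∀ x ∈ F, ∀ y ∈ G, x < y) :
    SplitsIntoBlocks X A (F ∪ G) (n + 1) := by
  induction n generalizing F with
  | zero =>
    obtain rfl : F = ∅ := h
    rw [empty_union]
    exact ⟨G, ⟨Subset.rfl, by simp⟩, hG_ne, hGX, hGA, sdiff_self⟩
  | succ n ih =>
    obtain ⟨c, hc, hc_ne, hcX, hcA, hrest⟩ := h
    have hGc : Disjoint G c := disjoint_left.2 fun y hy hyc ↦ (hFG y (hc.1 hyc) y hy).false
    refine ⟨c, ⟨hc.1.trans subset_union_left, fun x hx y hy ↦ ?_⟩, hc_ne, hcX, hcA, ?_⟩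
    · obtain ⟨hyF | hyG, hyc⟩ := mem_sdiff.1 hy |>.imp_left mem_union.1
      · exact hc.2 x hx y (mem_sdiff.2 ⟨hyF, hyc⟩)
      · exact hFG x (hc.1 hx) y hyG
    · rw [union_sdiff_distrib, sdiff_eq_self_of_disjoint hGc]
      exact ih hrest fun x hx ↦ hFG x (sdiff_subset hx)

end SplitsIntoBlocks

lemma sumPow_succ (u : Ultrafilter ℕ) {n : ℕ} (hn : 1 ≤ n) :
    sumPow u (n + 1) = sumPow u n + u := by
  obtain ⟨k, rfl⟩ := Nat.exists_eq_add_of_le' hn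
  rfl

lemma setOf_splitsIntoBlocks_mem_sumPow {X A : Set ℕ} {u : Ultrafilter ℕ} (hAX : A ⊆ FS X)
    (hAu : A ∈ u) (hFS : ∀ Y : Set ℕ, Y ⊆ X → (X \ Y).Finite → FS Y ∈ u) {n : ℕ} (hn : 1 ≤ n) :
    {s | ∃ F, SplitsIntoBlocks X A F n ∧ s = ∑ i ∈ F, i} ∈ sumPow u n := by
  induction n, hn using Nat.le_induction with
  | base =>
    refine u.sets_of_superset hAu fun a ha ↦ ?_
    obtain ⟨F, hF_ne, hFX, rfl⟩ := hAX ha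
    have hF : SplitsIntoBlocks X A (∅ ∪ F) 1 :=
      SplitsIntoBlocks.union rfl hF_ne hFX ha (by simp)
    exact ⟨F, by rwa [empty_union] at hF, rfl⟩
  | succ n hn ih =>
    rw [sumPow_succ u hn]
    refine (Ultrafilter.eventually_add _ _ _).2 (Filter.mem_of_superset ih ?_)
    rintro _ ⟨F, hF, rfl⟩
    let N := F.sup id
    have hcofinite : (X \ (X ∩ Set.Ioi N)).Finite :=
      (Set.finite_Iic N).subset fun y hy ↦ Set.mem_Iic.2 <| not_lt.1 fun hNy ↦ hy.2 ⟨hy.1, hNy⟩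
    filter_upwards [hAu, hFS _ Set.inter_subset_left hcofinite] with b hbA ⟨G, hG_ne, hGY, hb⟩
    have hFG : ∀ x ∈ F, ∀ y ∈ G, x < y := fun x hx y hy ↦
      (le_sup (f := id) hx).trans_lt (hGY hy).2
    refine ⟨F ∪ G, hF.union hG_ne (fun y hy ↦ (hGY hy).1) (hb ▸ hbA) hFG, ?_⟩
    rw [sum_union (disjoint_left.2 fun x hxF hxG ↦ (hFG x hxF x hxG).false), hb]

theorem statement4_general (X : Set ℕ) (hX : UniquenessOfSums X)
    (u : Ultrafilter ℕ) (hu : IsAdequateUltrafilter X u) :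
    ∀ n m : ℕ, 1 ≤ n → 1 ≤ m → sumPow u n = sumPow u m → n = m := by
  obtain ⟨⟨A, hAu, hA⟩, hFS⟩ := hu
  intro n m hn hm hnm
  have hBn := setOf_splitsIntoBlocks_mem_sumPow hA.1 hAu hFS hn
  have hBm := setOf_splitsIntoBlocks_mem_sumPow hA.1 hAu hFS hm
  rw [← hnm] at hBm
  obtain ⟨_, ⟨F, hF, rfl⟩, G, hG, hFG⟩ := (sumPow u n).nonempty_of_mem (inter_mem hBn hBm)
  obtain rfl : F = G := hX F G hF.subset hG.subset (hF.nonempty (by omega))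
    (hG.nonempty (by omega)) hFG
  exact hF.eq_of_isAdequateSet hA hG

/-- If `X` is infinite with uniqueness of sums and `u` is an `X`-adequate ultrafilter, then `u`
generates a free subsemigroup: `u^n = u^m → n = m` for `n, m ≥ 1`. -/
theorem statement4 (X : Set ℕ) (hXinf : X.Infinite) (hX : UniquenessOfSums X)
    (u : Ultrafilter ℕ) (hu : IsAdequateUltrafilter X u) :
    ∀ n m : ℕ, 1 ≤ n → 1 ≤ m → sumPow u n = sumPow u m → n = m :=
  statement4_general X hX u hu
end

section
/- Let X ⊆ ℕ be a set with uniqueness of sums, and let p be an X-adequate ultrafilter on ℕ. Then every element of the family 𝓕^p (the closure of {p} under indexed sums ⊕) is X-adequate. -/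
/-- The Blass–Frolík sum `Σ_u u_n`, an ultrafilter on `ℕ × ℕ`:
`A ∈ BFsum u v ↔ {n | {m | (n, m) ∈ A} ∈ v n} ∈ u`. -/
def BFsum (u : Ultrafilter ℕ) (v : ℕ → Ultrafilter ℕ) : Ultrafilter (ℕ × ℕ) :=
  u.bind fun n => (v n).map fun m => (n, m)

/-- The indexed sum `⊕_u u_n`: the image of `BFsum u v` under `(n, m) ↦ n + m`. -/
def indexedSum (u : Ultrafilter ℕ) (v : ℕ → Ultrafilter ℕ) : Ultrafilter ℕ :=
  (BFsum u v).map fun q => q.1 + q.2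

/-- `InF p` is the smallest family of ultrafilters on `ℕ` containing `p` and closed under
indexed sums `⊕`. -/
inductive InF (p : Ultrafilter ℕ) : Ultrafilter ℕ → Prop
  | base : InF p p
  | isum (u : Ultrafilter ℕ) (v : ℕ → Ultrafilter ℕ) :
      InF p u → (∀ n, InF p (v n)) → InF p (indexedSum u v)

lemma mem_indexedSum {u : Ultrafilter ℕ} {v : ℕ → Ultrafilter ℕ} {A : Set ℕ} :
    A ∈ indexedSum u v ↔ {n | {m | n + m ∈ A} ∈ v n} ∈ u := by
  change A ∈ Ultrafilter.map _ (Ultrafilter.bind _ _) ↔ _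
  rw [Ultrafilter.mem_map]
  change _ ∈ Filter.bind _ _ ↔ _
  rw [Filter.mem_bind']
  simp [Set.preimage]

lemma sum_image_id {s : Finset ℕ} {f : ℕ → ℕ}
    (h : ∀ x ∈ s, ∀ y ∈ s, f x = f y → x = y) :
    ∑ x ∈ s.image f, x = ∑ x ∈ s, f x := Finset.sum_image h

lemma adequate_indexedSum {X : Set ℕ} (hX : UniquenessOfSums X) (hXinf : X.Infinite)
    {u : Ultrafilter ℕ} {v : ℕ → Ultrafilter ℕ}
    (hu : IsAdequateUltrafilter X u) (hv : ∀ n, IsAdequateUltrafilter X (v n)) :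
    IsAdequateUltrafilter X (indexedSum u v) := by
  have he_mono : StrictMono (Nat.nth (· ∈ X)) := Nat.nth_strictMono hXinf
  have he_mem : ∀ k, Nat.nth (· ∈ X) k ∈ X := fun k => Nat.nth_mem_of_infinite hXinf k
  constructor
  · -- the adequate set
    obtain ⟨A, hAu, hAsub, hAseq⟩ := hu.1
    choose B hBmem hBad using fun n => (hv n).1
    refine ⟨{s : ℕ | ∃ a b : ℕ, ∃ F G : Finset ℕ, a ∈ A ∧ b ∈ B a ∧ F.Nonempty ∧ G.Nonempty ∧
        ↑F ⊆ X ∧ ↑G ⊆ X ∧ a = ∑ i ∈ F, i ∧ b = ∑ i ∈ G, i ∧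
        (∀ i ∈ F, ∀ j ∈ G, i < j) ∧ s = a + b}, ?_, ?_, ?_⟩
    · -- membership in the indexed sum
      rw [mem_indexedSum]
      refine Filter.mem_of_superset hAu ?_
      intro n hn
      obtain ⟨F, hFne, hFX, hFsum⟩ := hAsub hn
      have hYfin : (X \ {y ∈ X | ∀ i ∈ F, i < y}).Finite := by
        apply Set.Finite.subset (Set.finite_Iic (∑ i ∈ F, i))
        rintro y ⟨hyX, hy⟩
        simp only [Set.mem_setOf_eq, not_and, not_forall, not_lt] at hy
        obtain ⟨i, hiF, hiy⟩ := hy hyX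
        exact le_trans hiy (Finset.single_le_sum (f := fun i => i) (fun _ _ => Nat.zero_le _) hiF)
      have h1 : FS {y ∈ X | ∀ i ∈ F, i < y} ∈ v n := (hv n).2 _ (Set.sep_subset _ _) hYfin
      have h2 : B n ∩ FS {y ∈ X | ∀ i ∈ F, i < y} ∈ v n := Filter.inter_mem (hBmem n) h1
      refine Filter.mem_of_superset h2 ?_
      rintro m ⟨hmB, G, hGne, hGY, hGsum⟩
      exact ⟨n, m, F, G, hn, hmB, hFne, hGne, hFX, fun x hx => (hGY hx).1, hFsum, hGsum,
        fun i hi j hj => (hGY hj).2 i hi, rfl⟩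
    · -- subset of FS X
      rintro s ⟨a, b, F, G, -, -, hFne, hGne, hFX, hGX, rfl, rfl, hlt, rfl⟩
      have hdisj : Disjoint F G :=
        Finset.disjoint_left.2 fun x hxF hxG => lt_irrefl x (hlt x hxF x hxG)
      refine ⟨F ∪ G, hFne.mono Finset.subset_union_left, ?_, (Finset.sum_union hdisj).symm⟩
      rw [Finset.coe_union]
      exact Set.union_subset hFX hGX
    · -- adequacy of the set
      intro g hg
      obtain ⟨j, hj, hju⟩ := hAseq g hg
      have hh : StrictMono (fun k => g (j + 1 + k)) := fun x y hxy => hg (by omega)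
      obtain ⟨i, hi, hiu⟩ := (hBad (∑ k ∈ Finset.range (j + 1), Nat.nth (· ∈ X) (g k))).2 _ hh
      have hinj : ∀ s : Finset ℕ, ∀ x ∈ s, ∀ y ∈ s,
          Nat.nth (· ∈ X) (g x) = Nat.nth (· ∈ X) (g y) → x = y :=
        fun s x _ y _ hxy => (he_mono.comp hg).injective hxy
      refine ⟨j + 1 + i, ?_, ?_⟩
      · -- existence
        have hfact : ∑ k ∈ Finset.range (j + 1 + i + 1), Nat.nth (· ∈ X) (g k) =
            (∑ k ∈ Finset.range (j + 1), Nat.nth (· ∈ X) (g k)) +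
              ∑ k ∈ Finset.range (i + 1), Nat.nth (· ∈ X) (g (j + 1 + k)) := by
          rw [show j + 1 + i + 1 = (j + 1) + (i + 1) by ring, Finset.sum_range_add]
        refine ⟨_, _, (Finset.range (j + 1)).image (fun k => Nat.nth (· ∈ X) (g k)),
          (Finset.range (i + 1)).image (fun k => Nat.nth (· ∈ X) (g (j + 1 + k))),
          hj, hi, ?_, ?_, ?_, ?_, ?_, ?_, ?_, hfact⟩
        · exact (Finset.nonempty_range_iff.2 (by omega)).image _
        · exact (Finset.nonempty_range_iff.2 (by omega)).image _
        · intro x hx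
          simp only [Finset.coe_image, Set.mem_image] at hx
          obtain ⟨k, -, rfl⟩ := hx
          exact he_mem _
        · intro x hx
          simp only [Finset.coe_image, Set.mem_image] at hx
          obtain ⟨k, -, rfl⟩ := hx
          exact he_mem _
        · exact (sum_image_id (hinj _)).symm
        · refine (sum_image_id ?_).symm
          intro x _ y _ hxy
          have := (he_mono.comp hg).injective hxy
          omega
        · rintro x hx y hy
          simp only [Finset.mem_image, Finset.mem_range] at hx hy
          obtain ⟨k, hk, rfl⟩ := hx
          obtain ⟨l, hl, rfl⟩ := hy
          exact he_mono (hg (by omega))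
      · -- uniqueness
        intro m' hm'
        obtain ⟨a', b', F, G, ha'A, hb'B, hFne, hGne, hFX, hGX, haF, hbG, hlt, hsum⟩ := hm'
        have hdisj : Disjoint F G :=
          Finset.disjoint_left.2 fun x hxF hxG => lt_irrefl x (hlt x hxF x hxG)
        have hFG : F ∪ G = (Finset.range (m' + 1)).image (fun k => Nat.nth (· ∈ X) (g k)) := by
          apply hX
          · rw [Finset.coe_union]; exact Set.union_subset hFX hGX
          · intro x hx
            simp only [Finset.coe_image, Set.mem_image] at hx
            obtain ⟨k, -, rfl⟩ := hx
            exact he_mem _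
          · exact hFne.mono Finset.subset_union_left
          · exact (Finset.nonempty_range_iff.2 (by omega)).image _
          · rw [Finset.sum_union hdisj, ← haF, ← hbG, sum_image_id (hinj _)]
            exact hsum.symm
        set K := (Finset.range (m' + 1)).filter (fun k => Nat.nth (· ∈ X) (g k) ∈ F) with hKdef
        set L := (Finset.range (m' + 1)).filter (fun k => Nat.nth (· ∈ X) (g k) ∈ G) with hLdef
        have hKL : ∀ k ∈ K, ∀ l ∈ L, k < l := by
          intro k hk l hl
          rw [Finset.mem_filter] at hk hl
          exact (he_mono.comp hg).lt_iff_lt.1 (hlt _ hk.2 _ hl.2)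
        have hcover : ∀ k ∈ Finset.range (m' + 1), k ∈ K ∨ k ∈ L := by
          intro k hk
          have : Nat.nth (· ∈ X) (g k) ∈ F ∪ G := by
            rw [hFG]; exact Finset.mem_image_of_mem _ hk
          rcases Finset.mem_union.1 this with h | h
          · exact Or.inl (Finset.mem_filter.2 ⟨hk, h⟩)
          · exact Or.inr (Finset.mem_filter.2 ⟨hk, h⟩)
        have hmemK : ∀ x ∈ F, ∃ k ∈ K, Nat.nth (· ∈ X) (g k) = x := by
          intro x hx
          have hxS : x ∈ F ∪ G := Finset.mem_union_left _ hx
          rw [hFG] at hxS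
          obtain ⟨k, hk, hke⟩ := Finset.mem_image.1 hxS
          exact ⟨k, Finset.mem_filter.2 ⟨hk, hke ▸ hx⟩, hke⟩
        have hmemL : ∀ x ∈ G, ∃ k ∈ L, Nat.nth (· ∈ X) (g k) = x := by
          intro x hx
          have hxS : x ∈ F ∪ G := Finset.mem_union_right _ hx
          rw [hFG] at hxS
          obtain ⟨k, hk, hke⟩ := Finset.mem_image.1 hxS
          exact ⟨k, Finset.mem_filter.2 ⟨hk, hke ▸ hx⟩, hke⟩
        have hKne : K.Nonempty := by
          obtain ⟨x, hx⟩ := hFne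
          obtain ⟨k, hk, -⟩ := hmemK x hx
          exact ⟨k, hk⟩
        have hLne : L.Nonempty := by
          obtain ⟨x, hx⟩ := hGne
          obtain ⟨k, hk, -⟩ := hmemL x hx
          exact ⟨k, hk⟩
        have hjK : K.max' hKne ∈ K := K.max'_mem hKne
        have hjrange : K.max' hKne < m' + 1 := Finset.mem_range.1 (Finset.mem_filter.1 hjK).1
        have hKeq : K = Finset.range (K.max' hKne + 1) := by
          ext k
          simp only [Finset.mem_range]
          constructor
          · intro hk; exact Nat.lt_succ_of_le (Finset.le_max' K k hk)
          · intro hk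
            rcases hcover k (Finset.mem_range.2 (by omega)) with h | h
            · exact h
            · exact absurd (hKL _ hjK k h) (by omega)
        have hLeq : L = Finset.Ico (K.max' hKne + 1) (m' + 1) := by
          ext k
          simp only [Finset.mem_Ico]
          constructor
          · intro hk
            exact ⟨hKL _ hjK k hk, Finset.mem_range.1 (Finset.mem_filter.1 hk).1⟩
          · intro hk
            rcases hcover k (Finset.mem_range.2 hk.2) with h | h
            · have := Finset.le_max' K k h
              omega
            · exact h
        have hFval : F = K.image (fun k => Nat.nth (· ∈ X) (g k)) := by
          ext x
          simp only [Finset.mem_image]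
          constructor
          · intro hx
            obtain ⟨k, hk, hke⟩ := hmemK x hx
            exact ⟨k, hk, hke⟩
          · rintro ⟨k, hk, rfl⟩
            exact (Finset.mem_filter.1 hk).2
        have hGval : G = L.image (fun k => Nat.nth (· ∈ X) (g k)) := by
          ext x
          simp only [Finset.mem_image]
          constructor
          · intro hx
            obtain ⟨k, hk, hke⟩ := hmemL x hx
            exact ⟨k, hk, hke⟩
          · rintro ⟨k, hk, rfl⟩
            exact (Finset.mem_filter.1 hk).2
        have haval : a' = ∑ k ∈ Finset.range (K.max' hKne + 1), Nat.nth (· ∈ X) (g k) := by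
          rw [haF, hFval, sum_image_id (hinj _)]
          congr 1
        have hj'j : K.max' hKne = j := hju _ (show
          (∑ k ∈ Finset.range (K.max' hKne + 1), Nat.nth (· ∈ X) (g k)) ∈ A from
            haval ▸ ha'A)
        have hm'j : K.max' hKne + 1 ≤ m' := by
          obtain ⟨l, hl⟩ := hLne
          rw [hLeq, Finset.mem_Ico] at hl
          omega
        have hbval : b' = ∑ k ∈ Finset.range ((m' - j - 1) + 1),
            Nat.nth (· ∈ X) (g (j + 1 + k)) := by
          rw [hbG, hGval, sum_image_id (hinj _), hLeq, hj'j,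
            Finset.sum_Ico_eq_sum_range]
          have h1 : m' + 1 - (j + 1) = (m' - j - 1) + 1 := by omega
          rw [h1]
        have hlast : m' - j - 1 = i := by
          apply hiu
          have : b' ∈ B a' := hb'B
          rw [haval, hj'j] at this
          rw [← hbval]
          exact this
        omega
  · -- cofinite condition
    intro Y hYX hYfin
    rw [mem_indexedSum]
    refine Filter.mem_of_superset (hu.2 Y hYX hYfin) ?_
    rintro n ⟨F, hFne, hFY, hnF⟩
    have hfin : (X \ (Y \ ↑F)).Finite := by
      apply Set.Finite.subset (hYfin.union F.finite_toSet)
      intro x hx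
      rcases Classical.em (x ∈ Y) with h | h
      · right
        by_contra hxF
        exact hx.2 ⟨h, hxF⟩
      · exact Or.inl ⟨hx.1, h⟩
    have h1 : FS (Y \ ↑F) ∈ v n := (hv n).2 _ (fun x hx => hYX hx.1) hfin
    refine Filter.mem_of_superset h1 ?_
    rintro m ⟨G, hGne, hGY, rfl⟩
    have hdisj : Disjoint F G := Finset.disjoint_left.2 fun x hxF hxG => (hGY hxG).2 hxF
    exact ⟨F ∪ G, hFne.mono Finset.subset_union_left,
      by rw [Finset.coe_union]; exact Set.union_subset hFY (fun x hx => (hGY hx).1),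
      by rw [hnF, Finset.sum_union hdisj]⟩

/-- If `X` has uniqueness of sums and `p` is an `X`-adequate ultrafilter, then every element of
`𝓕^p` (the closure of `{p}` under indexed sums) is `X`-adequate. -/
theorem statement7 (X : Set ℕ) (hX : UniquenessOfSums X)
    (p : Ultrafilter ℕ) (hp : IsAdequateUltrafilter X p) :
    ∀ u : Ultrafilter ℕ, InF p u → IsAdequateUltrafilter X u := by
  have hXinf : X.Infinite := by
    by_contra h
    rw [Set.not_infinite] at h
    have h0 : FS (∅ : Set ℕ) ∈ p := hp.2 ∅ (Set.empty_subset X) (by simpa using h)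
    have h1 : FS (∅ : Set ℕ) = ∅ := by
      ext s
      simp only [FS, Set.mem_setOf_eq, Set.mem_empty_iff_false, iff_false]
      rintro ⟨F, hFne, hF, -⟩
      obtain ⟨x, hx⟩ := hFne
      exact hF hx
    rw [h1] at h0
    exact Ultrafilter.empty_notMem h0
  intro u hu
  induction hu with
  | base => exact hp
  | isum u v _ _ ihu ihv => exact adequate_indexedSum hX hXinf ihu ihv
end
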